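/- arXiv:2011.03305 — 5 statements merged into one kernel-verified Lean document; each statement's English description precedes it below -/
import Mathlib

section
/- Let f : ℝ → ℝ be convex and let [x₁, x₂] ⊆ ℝ be an interval. For any α with f'_-(x₁) ≤ α ≤ f'_+(x₂), the point c = sup{ z ∈ [x₁,x₂] : f'_-(z) ≤ α } satisfies f'_-(c) ≤ α ≤ f'_+(c), i.e., α ∈ ∂f(c). -/
/-!
The left derivative `fl` of a convex `f` is monotone and left-continuous, because `f` is
continuous and `fl w` dominates the secant slopes ending at `w`. Every `w < c` is below some
point of the set, so `fl w ≤ α` and hence `fl c ≤ α`. Every `w ∈ (c, x₂]` lies outside the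
set, so `α < fl w ≤ slope f w z` for `w < z`; letting `w → c⁺` gives `α ≤ slope f c z`, hence
`α ≤ fr c` (if `c = x₂` this is the hypothesis). Finally `fl c ≤ α ≤ fr c` bounds the secant
slopes on either side of `c`, which is the subgradient inequality.
-/

open Filter Topology Set

def subdiff (f : ℝ → ℝ) (x : ℝ) : Set ℝ :=
  {d : ℝ | ∀ z : ℝ, f x + d * (z - x) ≤ f z}

namespace ConvexOn

variable {f fl fr : ℝ → ℝ}

lemma continuousAt_slope (hf : ConvexOn ℝ univ f) {a c : ℝ} (hac : a ≠ c) :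
    ContinuousAt (slope f a) c := by
  have hfc : Continuous f := continuousOn_univ.1 (hf.continuousOn isOpen_univ)
  rw [slope_fun_def_field]
  exact (hfc.continuousAt.sub continuousAt_const).div (continuousAt_id.sub continuousAt_const)
    (sub_ne_zero.2 hac.symm)

lemma le_slope_of_hasDerivWithinAt_Iio (hf : ConvexOn ℝ univ f) {x y f' : ℝ} (hxy : x < y)
    (hf' : HasDerivWithinAt f f' (Iio x) x) : f' ≤ slope f x y := by
  refine le_of_tendsto ((hasDerivWithinAt_iff_tendsto_slope' self_notMem_Iio).1 hf') ?_
  filter_upwards [self_mem_nhdsWithin] with u (hu : u < x)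
  exact hf.slope_mono trivial ⟨trivial, hu.ne⟩ ⟨trivial, hxy.ne'⟩ (hu.trans hxy).le

lemma monotone_of_hasDerivWithinAt_Iio (hf : ConvexOn ℝ univ f)
    (hfl : ∀ x, HasDerivWithinAt f (fl x) (Iio x) x) : Monotone fl := by
  intro x y hxy
  rcases hxy.lt_or_eq with hlt | rfl
  · exact (hf.le_slope_of_hasDerivWithinAt_Iio hlt (hfl x)).trans
      (hf.slope_le_of_hasDerivWithinAt_Iio trivial trivial hlt (hfl y))
  · rfl

lemma leftDeriv_le_of_eventually_le (hf : ConvexOn ℝ univ f)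
    (hfl : ∀ x, HasDerivWithinAt f (fl x) (Iio x) x) {c α : ℝ}
    (hα : ∀ᶠ w in 𝓝[<] c, fl w ≤ α) : fl c ≤ α := by
  obtain ⟨a, hac, ha⟩ := mem_nhdsLT_iff_exists_Ioo_subset.1 hα
  have hslope : ∀ z ∈ Ioo a c, slope f z c ≤ α := by
    intro z hz
    have hcont : Tendsto (slope f z) (𝓝[<] c) (𝓝 (slope f z c)) :=
      (hf.continuousAt_slope hz.2.ne).tendsto.mono_left nhdsWithin_le_nhds
    refine le_of_tendsto hcont ?_
    filter_upwards [Ioo_mem_nhdsLT hz.2] with w hw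
    exact (hf.slope_le_of_hasDerivWithinAt_Iio trivial trivial hw.1 (hfl w)).trans
      (ha ⟨hz.1.trans hw.1, hw.2⟩)
  refine le_of_tendsto ((hasDerivWithinAt_iff_tendsto_slope' self_notMem_Iio).1 (hfl c)) ?_
  filter_upwards [Ioo_mem_nhdsLT hac] with z hz
  rw [slope_comm]
  exact hslope z hz

lemma le_rightDeriv_of_eventually_le_leftDeriv (hf : ConvexOn ℝ univ f)
    (hfl : ∀ x, HasDerivWithinAt f (fl x) (Iio x) x) {c α : ℝ}
    (hfr : HasDerivWithinAt f (fr c) (Ioi c) c) (hα : ∀ᶠ w in 𝓝[>] c, α ≤ fl w) :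
    α ≤ fr c := by
  obtain ⟨b, hcb, hb⟩ := mem_nhdsGT_iff_exists_Ioo_subset.1 hα
  have hslope : ∀ z ∈ Ioo c b, α ≤ slope f c z := by
    intro z hz
    rw [slope_comm]
    have hcont : Tendsto (slope f z) (𝓝[>] c) (𝓝 (slope f z c)) :=
      (hf.continuousAt_slope hz.1.ne').tendsto.mono_left nhdsWithin_le_nhds
    refine ge_of_tendsto hcont ?_
    filter_upwards [Ioo_mem_nhdsGT hz.1] with w hw
    rw [slope_comm]
    exact (hb ⟨hw.1, hw.2.trans hz.2⟩).trans (hf.le_slope_of_hasDerivWithinAt_Iio hw.2 (hfl w))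
  refine ge_of_tendsto ((hasDerivWithinAt_iff_tendsto_slope' self_notMem_Ioi).1 hfr) ?_
  filter_upwards [Ioo_mem_nhdsGT hcb] with z hz using hslope z hz

lemma mem_subdiff_of_le_of_le (hf : ConvexOn ℝ univ f) {c α l r : ℝ}
    (hl : HasDerivWithinAt f l (Iio c) c) (hr : HasDerivWithinAt f r (Ioi c) c)
    (hlα : l ≤ α) (hαr : α ≤ r) : α ∈ subdiff f c := by
  intro y
  rcases lt_trichotomy y c with hyc | rfl | hcy
  · have h := (hf.slope_le_of_hasDerivWithinAt_Iio trivial trivial hyc hl).trans hlα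
    rw [slope_def_field, div_le_iff₀ (sub_pos.2 hyc)] at h
    nlinarith
  · simp
  · have h := hαr.trans (hf.le_slope_of_hasDerivWithinAt_Ioi trivial trivial hcy hr)
    rw [slope_def_field, le_div_iff₀ (sub_pos.2 hcy)] at h
    nlinarith

end ConvexOn

theorem stmt_4 (f : ℝ → ℝ) (hf : ConvexOn ℝ Set.univ f) (fl fr : ℝ → ℝ)
    (hfl : ∀ x : ℝ,
      Filter.Tendsto (fun z => (f z - f x) / (z - x)) (𝓝[<] x) (𝓝 (fl x)))
    (hfr : ∀ x : ℝ,
      Filter.Tendsto (fun z => (f z - f x) / (z - x)) (𝓝[>] x) (𝓝 (fr x)))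
    (x₁ x₂ : ℝ) (hx : x₁ ≤ x₂) (α : ℝ) (hα₁ : fl x₁ ≤ α) (hα₂ : α ≤ fr x₂) :
    fl (sSup {z | z ∈ Set.Icc x₁ x₂ ∧ fl z ≤ α}) ≤ α ∧
    α ≤ fr (sSup {z | z ∈ Set.Icc x₁ x₂ ∧ fl z ≤ α}) ∧
    α ∈ subdiff f (sSup {z | z ∈ Set.Icc x₁ x₂ ∧ fl z ≤ α}) := by
  have hl : ∀ x, HasDerivWithinAt f (fl x) (Iio x) x := fun x =>
    (hasDerivWithinAt_iff_tendsto_slope' self_notMem_Iio).2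
      (by rw [slope_fun_def_field]; exact hfl x)
  have hr : ∀ x, HasDerivWithinAt f (fr x) (Ioi x) x := fun x =>
    (hasDerivWithinAt_iff_tendsto_slope' self_notMem_Ioi).2
      (by rw [slope_fun_def_field]; exact hfr x)
  set S : Set ℝ := {z | z ∈ Icc x₁ x₂ ∧ fl z ≤ α}
  have hx₁S : x₁ ∈ S := ⟨⟨le_rfl, hx⟩, hα₁⟩
  have hSbdd : BddAbove S := ⟨x₂, fun z hz => hz.1.2⟩
  set c := sSup S
  have hleft : fl c ≤ α := by
    refine hf.leftDeriv_le_of_eventually_le hl (eventually_nhdsWithin_of_forall fun w hw => ?_)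
    obtain ⟨s, hsS, hws⟩ := exists_lt_of_lt_csSup ⟨x₁, hx₁S⟩ hw
    exact (hf.monotone_of_hasDerivWithinAt_Iio hl hws.le).trans hsS.2
  have hright : α ≤ fr c := by
    rcases (csSup_le ⟨x₁, hx₁S⟩ fun z hz => hz.1.2 : c ≤ x₂).eq_or_lt with hc | hc
    · rwa [show c = x₂ from hc]
    refine hf.le_rightDeriv_of_eventually_le_leftDeriv hl (hr c) ?_
    filter_upwards [Ioo_mem_nhdsGT hc] with w hw
    by_contra! hwα
    have hwS : w ∈ S := ⟨⟨(le_csSup hSbdd hx₁S).trans hw.1.le, hw.2.le⟩, hwα.le⟩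
    exact (le_csSup hSbdd hwS).not_gt hw.1
  exact ⟨hleft, hright, hf.mem_subdiff_of_le_of_le (hl c) (hr c) hleft hright⟩
end

section
/- Let f : ℝ → ℝ be convex with inf_x f'_-(x) < sup_x f'_+(x), and let λ ∈ ℝ. The set Ω(λ) of minimizers of x ↦ f(x) − λx is nonempty if and only if either (1) there exists x̄ ∈ ℝ with f'_-(x̄) = inf_x f'_-(x) = λ or f'_+(x̄) = sup_x f'_+(x) = λ, or (2) inf_x f'_-(x) < λ < sup_x f'_+(x). -/
/-!
A point `x` minimizes `z ↦ f z - λ z` exactly when `λ` lies between the one-sided derivatives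
`f'₋(x) ≤ λ ≤ f'₊(x)`: secant slopes of a convex function increase, and the one-sided
derivatives are their limits. If `λ` is one of the extreme values `inf f'₋` or `sup f'₊`, this
condition holds at a point where the extreme value is attained. If `inf f'₋ < λ < sup f'₊`, pick
`f'₋(a) < λ < f'₊(b)`; then `a ≤ b`, the function decreases to the left of `a` and increases to
the right of `b`, so its minimum over the compact interval `[a, b]` is a global minimum.
-/

open Filter Topology Set

section Slope

variable {f : ℝ → ℝ} {s : Set ℝ} {a lam x z : ℝ}

theorem hasDerivWithinAt_of_tendsto_div_sub (hx : x ∉ s)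
    (h : Tendsto (fun z => (f z - f x) / (z - x)) (𝓝[s] x) (𝓝 a)) :
    HasDerivWithinAt f a s x :=
  (hasDerivWithinAt_iff_tendsto_slope' hx).2 <| h.congr fun z => (slope_def_field f x z).symm

theorem sub_mul_le_sub_mul_iff_le_slope (hxz : x < z) :
    f x - lam * x ≤ f z - lam * z ↔ lam ≤ slope f x z := by
  rw [slope_def_field, le_div_iff₀ (sub_pos.2 hxz)]
  constructor <;> intro h <;> linarith

theorem sub_mul_le_sub_mul_iff_slope_le (hzx : z < x) :
    f x - lam * x ≤ f z - lam * z ↔ slope f z x ≤ lam := by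
  rw [slope_def_field, div_le_iff₀ (sub_pos.2 hzx)]
  constructor <;> intro h <;> linarith

theorem forall_sub_mul_le_iff_slope :
    (∀ z, f x - lam * x ≤ f z - lam * z) ↔
      (∀ z < x, slope f z x ≤ lam) ∧ ∀ z, x < z → lam ≤ slope f x z := by
  refine ⟨fun h => ⟨fun z hz => (sub_mul_le_sub_mul_iff_slope_le hz).1 (h z),
    fun z hz => (sub_mul_le_sub_mul_iff_le_slope hz).1 (h z)⟩, fun ⟨hleft, hright⟩ z => ?_⟩
  rcases lt_trichotomy z x with hzx | rfl | hxz
  · exact (sub_mul_le_sub_mul_iff_slope_le hzx).2 (hleft z hzx)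
  · exact le_rfl
  · exact (sub_mul_le_sub_mul_iff_le_slope hxz).2 (hright z hxz)

end Slope

theorem Continuous.exists_forall_le_of_outside_Icc {g : ℝ → ℝ} (hg : Continuous g) {a b : ℝ}
    (hab : a ≤ b) (ha : ∀ z < a, g a ≤ g z) (hb : ∀ z, b < z → g b ≤ g z) :
    ∃ x, ∀ z, g x ≤ g z := by
  obtain ⟨x, -, hx⟩ := isCompact_Icc.exists_isMinOn (nonempty_Icc.2 hab) hg.continuousOn
  refine ⟨x, fun z => ?_⟩
  rcases lt_or_ge z a with hza | haz
  · exact (hx ⟨le_rfl, hab⟩).trans (ha z hza)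
  rcases le_or_gt z b with hzb | hbz
  · exact hx ⟨haz, hzb⟩
  · exact (hx ⟨hab, le_rfl⟩).trans (hb z hbz)

namespace ConvexOn

variable {f : ℝ → ℝ} (hf : ConvexOn ℝ univ f) {a b lam x y : ℝ}
include hf

theorem forall_slope_le_iff (hl : HasDerivWithinAt f a (Iio x) x) :
    (∀ z < x, slope f z x ≤ lam) ↔ a ≤ lam := by
  refine ⟨fun h => le_of_tendsto ((hasDerivWithinAt_iff_tendsto_slope' self_notMem_Iio).1 hl) ?_,
    fun h z hz => (hf.slope_le_of_hasDerivWithinAt_Iio trivial trivial hz hl).trans h⟩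
  filter_upwards [self_mem_nhdsWithin] with z hz
  rw [slope_comm]
  exact h z hz

theorem forall_le_slope_iff (hr : HasDerivWithinAt f b (Ioi x) x) :
    (∀ z, x < z → lam ≤ slope f x z) ↔ lam ≤ b := by
  refine ⟨fun h => ge_of_tendsto ((hasDerivWithinAt_iff_tendsto_slope' self_notMem_Ioi).1 hr) ?_,
    fun h z hz => h.trans (hf.le_slope_of_hasDerivWithinAt_Ioi trivial trivial hz hr)⟩
  filter_upwards [self_mem_nhdsWithin] with z hz
  exact h z hz

theorem forall_sub_mul_le_iff (hl : HasDerivWithinAt f a (Iio x) x)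
    (hr : HasDerivWithinAt f b (Ioi x) x) :
    (∀ z, f x - lam * x ≤ f z - lam * z) ↔ a ≤ lam ∧ lam ≤ b := by
  rw [forall_sub_mul_le_iff_slope, hf.forall_slope_le_iff hl, hf.forall_le_slope_iff hr]

theorem le_of_hasDerivWithinAt_Iio_Ioi (hl : HasDerivWithinAt f a (Iio x) x)
    (hr : HasDerivWithinAt f b (Ioi x) x) : a ≤ b := by
  rw [← hl.derivWithin (uniqueDiffWithinAt_Iio x), ← hr.derivWithin (uniqueDiffWithinAt_Ioi x)]
  exact hf.leftDeriv_le_rightDeriv_of_mem_interior (by simp)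

theorem exists_forall_sub_mul_le (hl : HasDerivWithinAt f a (Iio x) x)
    (hr : HasDerivWithinAt f b (Ioi y) y) (ha : a < lam) (hb : lam < b) :
    ∃ z, ∀ w, f z - lam * z ≤ f w - lam * w := by
  have hxy : x ≤ y := by
    by_contra! hyx
    have := hf.le_slope_of_hasDerivWithinAt_Ioi trivial trivial hyx hr
    linarith [hf.slope_le_of_hasDerivWithinAt_Iio trivial trivial hyx hl]
  have hcont : Continuous fun z => f z - lam * z :=
    (continuousOn_univ.1 (hf.continuousOn isOpen_univ)).sub (continuous_const.mul continuous_id)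
  refine hcont.exists_forall_le_of_outside_Icc hxy (fun z hz => ?_) fun z hz => ?_
  · exact (sub_mul_le_sub_mul_iff_slope_le hz).2 ((hf.forall_slope_le_iff hl).2 ha.le z hz)
  · exact (sub_mul_le_sub_mul_iff_le_slope hz).2 ((hf.forall_le_slope_iff hr).2 hb.le z hz)

end ConvexOn

theorem stmt_6_general (f : ℝ → ℝ) (hf : ConvexOn ℝ Set.univ f) (fl fr : ℝ → ℝ)
    (hfl : ∀ x : ℝ,
      Filter.Tendsto (fun z => (f z - f x) / (z - x)) (𝓝[<] x) (𝓝 (fl x)))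
    (hfr : ∀ x : ℝ,
      Filter.Tendsto (fun z => (f z - f x) / (z - x)) (𝓝[>] x) (𝓝 (fr x)))
    (lam : ℝ) :
    ({x : ℝ | ∀ z : ℝ, f x - lam * x ≤ f z - lam * z}.Nonempty) ↔
      ((∃ xb : ℝ, (fl xb = lam ∧ ∀ x : ℝ, fl xb ≤ fl x) ∨
                  (fr xb = lam ∧ ∀ x : ℝ, fr x ≤ fr xb)) ∨
       ((∃ x : ℝ, fl x < lam) ∧ (∃ x : ℝ, lam < fr x))) := by
  have hl x := hasDerivWithinAt_of_tendsto_div_sub self_notMem_Iio (hfl x)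
  have hr x := hasDerivWithinAt_of_tendsto_div_sub self_notMem_Ioi (hfr x)
  have hmin x := hf.forall_sub_mul_le_iff (lam := lam) (hl x) (hr x)
  have hlr x := hf.le_of_hasDerivWithinAt_Iio_Ioi (hl x) (hr x)
  constructor
  · rintro ⟨x, hx⟩
    obtain ⟨hlx, hrx⟩ := (hmin x).1 hx
    by_cases hbelow : ∃ y, fl y < lam
    · by_cases habove : ∃ y, lam < fr y
      · exact Or.inr ⟨hbelow, habove⟩
      push Not at habove
      have heq : fr x = lam := (habove x).antisymm hrx
      exact Or.inl ⟨x, Or.inr ⟨heq, fun y => heq ▸ habove y⟩⟩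
    push Not at hbelow
    have heq : fl x = lam := hlx.antisymm (hbelow x)
    exact Or.inl ⟨x, Or.inl ⟨heq, fun y => heq ▸ hbelow y⟩⟩
  · rintro (⟨x, ⟨heq, -⟩ | ⟨heq, -⟩⟩ | ⟨⟨x, hx⟩, ⟨y, hy⟩⟩)
    · exact ⟨x, (hmin x).2 ⟨heq.le, heq ▸ hlr x⟩⟩
    · exact ⟨x, (hmin x).2 ⟨heq ▸ hlr x, heq.ge⟩⟩
    · exact hf.exists_forall_sub_mul_le (hl x) (hr y) hx hy

theorem stmt_6 (f : ℝ → ℝ) (hf : ConvexOn ℝ Set.univ f) (fl fr : ℝ → ℝ)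
    (hfl : ∀ x : ℝ,
      Filter.Tendsto (fun z => (f z - f x) / (z - x)) (𝓝[<] x) (𝓝 (fl x)))
    (hfr : ∀ x : ℝ,
      Filter.Tendsto (fun z => (f z - f x) / (z - x)) (𝓝[>] x) (𝓝 (fr x)))
    (hifs : ∃ x y : ℝ, fl x < fr y) (lam : ℝ) :
    ({x : ℝ | ∀ z : ℝ, f x - lam * x ≤ f z - lam * z}.Nonempty) ↔
      ((∃ xb : ℝ, (fl xb = lam ∧ ∀ x : ℝ, fl xb ≤ fl x) ∨
                  (fr xb = lam ∧ ∀ x : ℝ, fr x ≤ fr xb)) ∨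
       ((∃ x : ℝ, fl x < lam) ∧ (∃ x : ℝ, lam < fr x))) :=
  stmt_6_general f hf fl fr hfl hfr lam
end

section
/- Let n ≥ 1 and let f₁,…,f_n : ℝ → ℝ be convex functions, each with bounded nonempty sublevel sets, and let λᵢ, μᵢ ∈ [0,∞] for i = 1,…,n−1. Then the objective F(x) = Σᵢ fᵢ(xᵢ) + Σᵢ λᵢ(xᵢ − xᵢ₊₁)₊ + Σᵢ μᵢ(xᵢ₊₁ − xᵢ)₊ on ℝⁿ (with infinite parameters interpreted as hard constraints) is convex with bounded nonempty sublevel sets, and hence attains its minimum on ℝⁿ. -/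
open Filter Topology Set ENNReal Bornology

-- helper lemmas

lemma slope_right (f : ℝ → ℝ) (hf : ConvexOn ℝ Set.univ f) (x0 R : ℝ) (hR : 0 < R)
    (x : ℝ) (hx : x0 + R ≤ x) :
    f x0 + (f (x0 + R) - f x0) * ((x - x0) / R) ≤ f x := by
  rcases eq_or_lt_of_le hx with h | h
  · rw [← h]
    have : (x0 + R - x0) / R = 1 := by field_simp; ring
    rw [this, mul_one]
    linarith
  · set t : ℝ := R / (x - x0) with ht
    have hxx0 : 0 < x - x0 := by linarith
    have ht0 : 0 < t := div_pos hR hxx0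
    have ht1 : t < 1 := (div_lt_one hxx0).2 (by linarith)
    have key := hf.2 (Set.mem_univ x0) (Set.mem_univ x) (by linarith : (0:ℝ) ≤ 1 - t)
      (le_of_lt ht0) (by ring)
    have hpt : (1 - t) • x0 + t • x = x0 + R := by
      simp only [smul_eq_mul, ht]
      field_simp
      ring
    rw [hpt] at key
    simp only [smul_eq_mul] at key
    have h2 : (f (x0 + R) - f x0) / t ≤ f x - f x0 := by
      rw [div_le_iff₀ ht0]; nlinarith
    have h3 : (f (x0 + R) - f x0) * ((x - x0) / R) = (f (x0 + R) - f x0) / t := by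
      rw [ht]; field_simp
    linarith
 
lemma oneD (f : ℝ → ℝ) (hf : ConvexOn ℝ Set.univ f) (α : ℝ)
    (hne : {x : ℝ | f x ≤ α}.Nonempty) (hbd : IsBounded {x : ℝ | f x ≤ α}) :
    (∃ m : ℝ, ∀ x, m ≤ f x) ∧ ∀ β : ℝ, IsBounded {x : ℝ | f x ≤ β} := by
  obtain ⟨x0, hx0⟩ := hne
  simp only [mem_setOf_eq] at hx0
  obtain ⟨r, hr⟩ := (Metric.isBounded_iff_subset_closedBall x0).1 hbd
  set R : ℝ := max r 0 + 1 with hRdef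
  have hR : 0 < R := by positivity
  have houtR : ∀ y : ℝ, R ≤ |y - x0| → α < f y := by
    intro y hy
    by_contra hc
    push_neg at hc
    have h1 := hr (by exact hc : y ∈ {x | f x ≤ α})
    rw [Metric.mem_closedBall, Real.dist_eq] at h1
    have : |y - x0| ≤ max r 0 := le_trans h1 (le_max_left _ _)
    linarith
  have hfr : α < f (x0 + R) := houtR _ (by rw [show x0 + R - x0 = R by ring, abs_of_pos hR])
  have hfl : α < f (x0 - R) := houtR _ (by rw [show x0 - R - x0 = -R by ring, abs_neg, abs_of_pos hR])
  set eR : ℝ := f (x0 + R) - f x0 with heR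
  set eL : ℝ := f (x0 - R) - f x0 with heL
  have heR0 : 0 < eR := by rw [heR]; linarith
  have heL0 : 0 < eL := by rw [heL]; linarith
  have slopeR : ∀ x, x0 + R ≤ x → f x0 + eR * ((x - x0)/R) ≤ f x :=
    fun x hx => slope_right f hf x0 R hR x hx
  have slopeL : ∀ x, x ≤ x0 - R → f x0 + eL * ((x0 - x)/R) ≤ f x := by
    intro x hx
    set g : ℝ → ℝ := fun y => f (2*x0 - y) with hg
    have hgconv : ConvexOn ℝ Set.univ g := by
      constructor
      · exact convex_univ
      · intro u _ v _ a b ha hb hab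
        have h := hf.2 (Set.mem_univ (2*x0-u)) (Set.mem_univ (2*x0-v)) ha hb hab
        simp only [smul_eq_mul, hg] at h ⊢
        have he : a * (2*x0-u) + b * (2*x0-v) = 2*x0 - (a*u+b*v) := by linear_combination 2*x0*hab
        rw [he] at h
        exact h
    have h1 := slope_right g hgconv x0 R hR (2*x0 - x) (by linarith)
    simp only [hg] at h1
    rw [show 2*x0 - x0 = x0 by ring] at h1
    have e1 : 2*x0 - (x0 + R) = x0 - R := by ring
    have e2 : 2*x0 - (2*x0 - x) = x := by ring
    have e3 : (2*x0 - x - x0) = x0 - x := by ring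
    rw [e1, e2, e3] at h1
    exact h1
  set M1 : ℝ := max (f (x0 - R)) (f (x0 + R)) with hM1
  have hmidup : ∀ y, x0 - R ≤ y → y ≤ x0 + R → f y ≤ M1 := by
    intro y h1 h2
    set s : ℝ := (y - (x0 - R)) / (2*R) with hs
    have hs0 : 0 ≤ s := by
      apply div_nonneg (by linarith) (by linarith)
    have hs1 : s ≤ 1 := by rw [hs, div_le_one (by linarith)]; linarith
    have key := hf.2 (Set.mem_univ (x0-R)) (Set.mem_univ (x0+R))
      (by linarith : (0:ℝ) ≤ 1-s) hs0 (by ring)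
    have hpt : (1-s) • (x0-R) + s • (x0+R) = y := by
      simp only [smul_eq_mul, hs]; field_simp; ring
    rw [hpt] at key
    simp only [smul_eq_mul] at key
    calc f y ≤ (1-s) * f (x0-R) + s * f (x0+R) := key
      _ ≤ (1-s) * M1 + s * M1 := by
          gcongr
          · exact le_max_left _ _
          · exact le_max_right _ _
      _ = M1 := by ring
  have hmid : ∀ y, x0 - R ≤ y → y ≤ x0 + R → 2 * f x0 - M1 ≤ f y := by
    intro y h1 h2
    have hub := hmidup (2*x0 - y) (by linarith) (by linarith)
    have key := hf.2 (Set.mem_univ y) (Set.mem_univ (2*x0 - y))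
      (by norm_num : (0:ℝ) ≤ 1/2) (by norm_num : (0:ℝ) ≤ 1/2) (by norm_num)
    have hpt : (1/2 : ℝ) • y + (1/2 : ℝ) • (2*x0 - y) = x0 := by
      simp only [smul_eq_mul]; ring
    rw [hpt] at key
    simp only [smul_eq_mul] at key
    linarith
  constructor
  · refine ⟨min (2 * f x0 - M1) (f x0), fun x => ?_⟩
    rcases le_or_gt x (x0 - R) with h | h
    · have h1 := slopeL x h
      have h2 : 0 ≤ eL * ((x0 - x)/R) :=
        mul_nonneg heL0.le (div_nonneg (by linarith) hR.le)
      calc min (2*f x0 - M1) (f x0) ≤ f x0 := min_le_right _ _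
        _ ≤ f x := by linarith
    · rcases le_or_gt (x0 + R) x with h' | h'
      · have h1 := slopeR x h'
        have h2 : 0 ≤ eR * ((x - x0)/R) :=
          mul_nonneg heR0.le (div_nonneg (by linarith) hR.le)
        calc min (2*f x0 - M1) (f x0) ≤ f x0 := min_le_right _ _
          _ ≤ f x := by linarith
      · exact le_trans (min_le_left _ _) (hmid x (by linarith) h'.le)
  · intro β
    set M : ℝ := max (β - f x0) 0 with hM
    have hM0 : 0 ≤ M := le_max_right _ _
    have hMβ : β - f x0 ≤ M := le_max_left _ _
    set DR : ℝ := R + R * M / eR with hDR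
    set DL : ℝ := R + R * M / eL with hDL
    have keyR : ∀ x, f x ≤ β → x - x0 ≤ DR := by
      intro x hx
      by_contra hc
      push_neg at hc
      have hDR0 : R ≤ DR := by
        rw [hDR]
        have : 0 ≤ R * M / eR := by positivity
        linarith
      have h1 := slopeR x (by linarith)
      have h2 : eR * (DR/R) < eR * ((x - x0)/R) := by
        gcongr
      have h3 : eR * (DR/R) = eR + M := by
        rw [hDR]; field_simp
      rw [h3] at h2
      linarith
    have keyL : ∀ x, f x ≤ β → x0 - x ≤ DL := by
      intro x hx
      by_contra hc
      push_neg at hc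
      have hDL0 : R ≤ DL := by
        rw [hDL]
        have : 0 ≤ R * M / eL := by positivity
        linarith
      have h1 := slopeL x (by linarith)
      have h2 : eL * (DL/R) < eL * ((x0 - x)/R) := by
        gcongr
      have h3 : eL * (DL/R) = eL + M := by
        rw [hDL]; field_simp
      rw [h3] at h2
      linarith
    rw [Metric.isBounded_iff_subset_closedBall x0]
    refine ⟨max DR DL, fun x hx => ?_⟩
    simp only [mem_setOf_eq] at hx
    rw [Metric.mem_closedBall, Real.dist_eq, abs_le]
    constructor
    · have := keyL x hx
      have h2 : DL ≤ max DR DL := le_max_right _ _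
      linarith
    · have := keyR x hx
      have h2 : DR ≤ max DR DL := le_max_left _ _
      linarith


lemma ereal_coe_sum {ι : Type*} [DecidableEq ι] (s : Finset ι) (g : ι → ℝ) :
    ((∑ i ∈ s, g i : ℝ) : EReal) = ∑ i ∈ s, ((g i : ℝ) : EReal) := by
  induction s using Finset.induction_on with
  | empty => simp
  | insert _ _ h ih => rw [Finset.sum_insert h, Finset.sum_insert h, EReal.coe_add, ih]

lemma ereal_mul_nonneg {a b : EReal} (ha : 0 ≤ a) (hb : 0 ≤ b) : 0 ≤ a * b := by
  rcases ha.lt_or_eq with h | h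
  · rcases hb.lt_or_eq with h' | h'
    · exact (EReal.mul_pos h h').le
    · rw [← h', mul_zero]
  · rw [← h, zero_mul]

lemma ennreal_coe_mul_coe (c : ℝ≥0∞) (t : ℝ) (h : c = ⊤ → t = 0) :
    (c : EReal) * (t : EReal) = ((c.toReal * t : ℝ) : EReal) := by
  by_cases hc : c = ⊤
  · subst hc; rw [h rfl]; simp
  · have h1 : (c : EReal) = ((c.toReal : ℝ) : EReal) := by
      rw [← EReal.toReal_coe_ennreal (x := c)]
      exact (EReal.coe_toReal (by simpa using hc) (EReal.coe_ennreal_ne_bot c)).symm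
    rw [h1, ← EReal.coe_mul]

example (c : ℝ≥0∞) : True := trivial

theorem stmt_16 (n : ℕ) (f : Fin (n + 1) → ℝ → ℝ)
    (hf : ∀ i, ConvexOn ℝ Set.univ (f i))
    (hflev : ∀ i, ∃ α : ℝ,
      {x : ℝ | f i x ≤ α}.Nonempty ∧ Bornology.IsBounded {x : ℝ | f i x ≤ α})
    (lam mu : Fin n → ℝ≥0∞)
    (F : (Fin (n + 1) → ℝ) → EReal)
    (hF : ∀ x : Fin (n + 1) → ℝ,
      F x = (∑ i : Fin (n + 1), ((f i (x i) : ℝ) : EReal)) +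
        ∑ i : Fin n,
          (((lam i : EReal) * ((max (x i.castSucc - x i.succ) 0 : ℝ) : EReal)) +
           ((mu i : EReal) * ((max (x i.succ - x i.castSucc) 0 : ℝ) : EReal)))) :
    (∀ x y : Fin (n + 1) → ℝ, ∀ a b : ℝ, 0 ≤ a → 0 ≤ b → a + b = 1 →
        F (a • x + b • y) ≤ (a : EReal) * F x + (b : EReal) * F y) ∧
    (∃ α : ℝ, {x : Fin (n + 1) → ℝ | F x ≤ (α : EReal)}.Nonempty ∧
        Bornology.IsBounded {x : Fin (n + 1) → ℝ | F x ≤ (α : EReal)}) ∧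
    (∃ xs : Fin (n + 1) → ℝ, ∀ x : Fin (n + 1) → ℝ, F xs ≤ F x) := by
  -- real-valued surrogate G and the constraint set C
  set pen : (Fin (n + 1) → ℝ) → ℝ := fun x => ∑ i : Fin n,
    ((lam i).toReal * max (x i.castSucc - x i.succ) 0 +
     (mu i).toReal * max (x i.succ - x i.castSucc) 0) with hpen
  set G : (Fin (n + 1) → ℝ) → ℝ := fun x => (∑ i, f i (x i)) + pen x with hG
  set C : Set (Fin (n + 1) → ℝ) :=
    {x | (∀ i, lam i = ⊤ → x i.castSucc ≤ x i.succ) ∧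
         (∀ i, mu i = ⊤ → x i.succ ≤ x i.castSucc)} with hC
  have hpen_nonneg : ∀ x, 0 ≤ pen x := by
    intro x
    apply Finset.sum_nonneg
    intro i _
    have h1 : (0:ℝ) ≤ max (x i.castSucc - x i.succ) 0 := le_max_right _ _
    have h2 : (0:ℝ) ≤ max (x i.succ - x i.castSucc) 0 := le_max_right _ _
    positivity
  have h0C : (fun _ => (0:ℝ)) ∈ C := by
    constructor <;> intro i _ <;> simp
  have hFC : ∀ x ∈ C, F x = ((G x : ℝ) : EReal) := by
    intro x hx
    rw [hF x, hG]
    simp only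
    rw [EReal.coe_add, ereal_coe_sum, hpen, ereal_coe_sum]
    congr 1
    apply Finset.sum_congr rfl
    intro i _
    rw [ennreal_coe_mul_coe _ _ (fun h => max_eq_right (sub_nonpos.2 (hx.1 i h))),
      ennreal_coe_mul_coe _ _ (fun h => max_eq_right (sub_nonpos.2 (hx.2 i h))),
      ← EReal.coe_add]
  have hterm_nonneg : ∀ (x : Fin (n+1) → ℝ) (i : Fin n), (0:EReal) ≤
      ((lam i : EReal) * ((max (x i.castSucc - x i.succ) 0 : ℝ) : EReal)) +
      ((mu i : EReal) * ((max (x i.succ - x i.castSucc) 0 : ℝ) : EReal)) := by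
    intro x i
    have h1 : (0:EReal) ≤ (lam i : EReal) := EReal.coe_ennreal_nonneg _
    have h2 : (0:EReal) ≤ (mu i : EReal) := EReal.coe_ennreal_nonneg _
    have h3 : (0:EReal) ≤ ((max (x i.castSucc - x i.succ) 0 : ℝ) : EReal) :=
      EReal.coe_nonneg.2 (le_max_right _ _)
    have h4 : (0:EReal) ≤ ((max (x i.succ - x i.castSucc) 0 : ℝ) : EReal) :=
      EReal.coe_nonneg.2 (le_max_right _ _)
    have := ereal_mul_nonneg h1 h3
    have := ereal_mul_nonneg h2 h4
    exact add_nonneg ‹_› ‹_›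
  have hFge : ∀ x, ((∑ i, f i (x i) : ℝ) : EReal) ≤ F x := by
    intro x
    rw [hF x, ereal_coe_sum]
    exact le_add_of_nonneg_right (Finset.sum_nonneg (fun i _ => hterm_nonneg x i))
  have hFnb : ∀ x, F x ≠ ⊥ := by
    intro x
    exact fun h => absurd (h ▸ hFge x) (by simp)
  have hFtop : ∀ x, x ∉ C → F x = ⊤ := by
    intro x hx
    have hex : ∃ i : Fin n,
        ((lam i : EReal) * ((max (x i.castSucc - x i.succ) 0 : ℝ) : EReal)) +
        ((mu i : EReal) * ((max (x i.succ - x i.castSucc) 0 : ℝ) : EReal)) = ⊤ := by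
      rw [hC, mem_setOf_eq] at hx
      rcases Classical.em (∀ i, lam i = ⊤ → x i.castSucc ≤ x i.succ) with h1 | h1
      · have h2 : ¬ ∀ i, mu i = ⊤ → x i.succ ≤ x i.castSucc := fun h => hx ⟨h1, h⟩
        push_neg at h2
        obtain ⟨i, hi, hlt⟩ := h2
        refine ⟨i, ?_⟩
        have hpos : (0:EReal) < ((max (x i.succ - x i.castSucc) 0 : ℝ) : EReal) := by
          rw [EReal.coe_pos]
          exact lt_max_of_lt_left (by linarith)
        rw [hi, EReal.coe_ennreal_top, EReal.top_mul_of_pos hpos]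
        apply EReal.add_top_of_ne_bot
        intro hb
        have h2 := ereal_mul_nonneg (EReal.coe_ennreal_nonneg (lam i))
          (EReal.coe_nonneg.2 (le_max_right (x i.castSucc - x i.succ) 0))
        rw [hb] at h2
        exact absurd h2 (by simp)
      · push_neg at h1
        obtain ⟨i, hi, hlt⟩ := h1
        refine ⟨i, ?_⟩
        have hpos : (0:EReal) < ((max (x i.castSucc - x i.succ) 0 : ℝ) : EReal) := by
          rw [EReal.coe_pos]
          exact lt_max_of_lt_left (by linarith)
        rw [hi, EReal.coe_ennreal_top, EReal.top_mul_of_pos hpos]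
        apply EReal.top_add_of_ne_bot
        intro hb
        have h2 := ereal_mul_nonneg (EReal.coe_ennreal_nonneg (mu i))
          (EReal.coe_nonneg.2 (le_max_right (x i.succ - x i.castSucc) 0))
        rw [hb] at h2
        exact absurd h2 (by simp)
    obtain ⟨i, hi⟩ := hex
    have hsum : (∑ i : Fin n,
        (((lam i : EReal) * ((max (x i.castSucc - x i.succ) 0 : ℝ) : EReal)) +
         ((mu i : EReal) * ((max (x i.succ - x i.castSucc) 0 : ℝ) : EReal)))) = ⊤ := by
      apply top_le_iff.1
      rw [← hi]
      exact Finset.single_le_sum (fun j _ => hterm_nonneg x j) (Finset.mem_univ i)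
    rw [hF x, hsum]
    exact EReal.add_top_of_ne_bot (by
      rw [← ereal_coe_sum]
      exact EReal.coe_ne_bot _)
  -- convexity of G (pointwise inequality)
  have hmax_ineq : ∀ (u v a b : ℝ), 0 ≤ a → 0 ≤ b → a + b = 1 →
      max (a*u + b*v) 0 ≤ a * max u 0 + b * max v 0 := by
    intro u v a b ha hb hab
    apply max_le
    · have h1 : u ≤ max u 0 := le_max_left _ _
      have h2 : v ≤ max v 0 := le_max_left _ _
      nlinarith
    · have h1 : (0:ℝ) ≤ max u 0 := le_max_right _ _
      have h2 : (0:ℝ) ≤ max v 0 := le_max_right _ _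
      positivity
  have hGconv : ∀ x y : Fin (n+1) → ℝ, ∀ a b : ℝ, 0 ≤ a → 0 ≤ b → a + b = 1 →
      G (a • x + b • y) ≤ a * G x + b * G y := by
    intro x y a b ha hb hab
    have happ : ∀ j : Fin (n+1), (a • x + b • y) j = a * x j + b * y j := by
      intro j; simp [smul_eq_mul]
    rw [hG]
    simp only
    have hsum1 : (∑ i, f i ((a • x + b • y) i)) ≤ a * (∑ i, f i (x i)) + b * (∑ i, f i (y i)) := by
      rw [Finset.mul_sum, Finset.mul_sum, ← Finset.sum_add_distrib]
      apply Finset.sum_le_sum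
      intro i _
      rw [happ i]
      have := (hf i).2 (Set.mem_univ (x i)) (Set.mem_univ (y i)) ha hb hab
      simpa [smul_eq_mul] using this
    have hsum2 : pen (a • x + b • y) ≤ a * pen x + b * pen y := by
      rw [hpen]
      simp only
      rw [Finset.mul_sum, Finset.mul_sum, ← Finset.sum_add_distrib]
      apply Finset.sum_le_sum
      intro i _
      rw [happ, happ]
      have e1 : a * x i.castSucc + b * y i.castSucc - (a * x i.succ + b * y i.succ)
          = a * (x i.castSucc - x i.succ) + b * (y i.castSucc - y i.succ) := by ring
      have e2 : a * x i.succ + b * y i.succ - (a * x i.castSucc + b * y i.castSucc)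
          = a * (x i.succ - x i.castSucc) + b * (y i.succ - y i.castSucc) := by ring
      rw [e1, e2]
      have m1 := hmax_ineq (x i.castSucc - x i.succ) (y i.castSucc - y i.succ) a b ha hb hab
      have m2 := hmax_ineq (x i.succ - x i.castSucc) (y i.succ - y i.castSucc) a b ha hb hab
      have hl : (0:ℝ) ≤ (lam i).toReal := ENNReal.toReal_nonneg
      have hm : (0:ℝ) ≤ (mu i).toReal := ENNReal.toReal_nonneg
      nlinarith [mul_le_mul_of_nonneg_left m1 hl, mul_le_mul_of_nonneg_left m2 hm]
    nlinarith [hsum1, hsum2]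
  -- C is closed under convex combinations
  have hCcomb : ∀ x ∈ C, ∀ y ∈ C, ∀ a b : ℝ, 0 ≤ a → 0 ≤ b → a • x + b • y ∈ C := by
    intro x hx y hy a b ha hb
    constructor
    · intro i hi
      have h1 := hx.1 i hi
      have h2 := hy.1 i hi
      simp only [Pi.add_apply, Pi.smul_apply, smul_eq_mul]
      nlinarith
    · intro i hi
      have h1 := hx.2 i hi
      have h2 := hy.2 i hi
      simp only [Pi.add_apply, Pi.smul_apply, smul_eq_mul]
      nlinarith
  -- part 1
  have part1 : ∀ x y : Fin (n + 1) → ℝ, ∀ a b : ℝ, 0 ≤ a → 0 ≤ b → a + b = 1 →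
      F (a • x + b • y) ≤ (a : EReal) * F x + (b : EReal) * F y := by
    intro x y a b ha hb hab
    rcases eq_or_lt_of_le ha with ha0 | ha0
    · have hb1 : b = 1 := by linarith
      subst hb1
      rw [← ha0, zero_smul, one_smul, zero_add, EReal.coe_zero, EReal.coe_one,
        zero_mul, one_mul, zero_add]
    · rcases eq_or_lt_of_le hb with hb0 | hb0
      · have ha1 : a = 1 := by linarith
        subst ha1
        rw [← hb0, zero_smul, one_smul, add_zero, EReal.coe_zero, EReal.coe_one,
          zero_mul, one_mul, add_zero]
      · -- a, b > 0
        by_cases hx : x ∈ C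
        · by_cases hy : y ∈ C
          · rw [hFC x hx, hFC y hy, hFC _ (hCcomb x hx y hy a b ha hb),
              ← EReal.coe_mul, ← EReal.coe_mul, ← EReal.coe_add]
            exact EReal.coe_le_coe_iff.2 (hGconv x y a b ha hb hab)
          · rw [hFtop y hy]
            have h1 : (b : EReal) * ⊤ = ⊤ := EReal.coe_mul_top_of_pos hb0
            rw [h1]
            have h2 : (a : EReal) * F x ≠ ⊥ := by
              have hge := hFge x
              intro hcontra
              rcases EReal.lt_iff_exists_real_btwn.1
                (show (⊥:EReal) < F x from lt_of_lt_of_le (EReal.bot_lt_coe _) hge)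
                with ⟨r, _, _⟩
              cases hFx : F x with
              | bot => exact hFnb x hFx
              | coe r => rw [hFx, ← EReal.coe_mul] at hcontra; exact EReal.coe_ne_bot _ hcontra
              | top => rw [hFx, EReal.coe_mul_top_of_pos ha0] at hcontra; simp at hcontra
            rw [EReal.add_top_of_ne_bot h2]
            exact le_top
        · rw [hFtop x hx]
          have h1 : (a : EReal) * ⊤ = ⊤ := EReal.coe_mul_top_of_pos ha0
          rw [h1]
          have h2 : (b : EReal) * F y ≠ ⊥ := by
            intro hcontra
            cases hFy : F y with
            | bot => exact hFnb y hFy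
            | coe r => rw [hFy, ← EReal.coe_mul] at hcontra; exact EReal.coe_ne_bot _ hcontra
            | top => rw [hFy, EReal.coe_mul_top_of_pos hb0] at hcontra; simp at hcontra
          rw [EReal.top_add_of_ne_bot h2]
          exact le_top
  -- lower bounds and bounded sublevels for each coordinate function
  choose als hns hbs using hflev
  have hone := fun i => oneD (f i) (hf i) (als i) (hns i) (hbs i)
  choose mlow hmlow using fun i => (hone i).1
  have hbdd : ∀ i (β : ℝ), IsBounded {t : ℝ | f i t ≤ β} := fun i => (hone i).2
  have hSb : ∀ α : ℝ, IsBounded {x : Fin (n+1) → ℝ | (∑ i, f i (x i)) ≤ α} := by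
    intro α
    set S : ℝ := ∑ j, mlow j with hS
    have hcoord : ∀ i : Fin (n+1), ∃ ρ : ℝ, 0 ≤ ρ ∧
        ∀ t : ℝ, f i t ≤ α - S + mlow i → |t| ≤ ρ := by
      intro i
      obtain ⟨r, hr⟩ := (Metric.isBounded_iff_subset_closedBall 0).1 (hbdd i (α - S + mlow i))
      refine ⟨max r 0, le_max_right _ _, fun t ht => ?_⟩
      have h1 := hr (by exact ht : t ∈ {u : ℝ | f i u ≤ α - S + mlow i})
      rw [Metric.mem_closedBall, Real.dist_eq, sub_zero] at h1
      exact le_trans h1 (le_max_left _ _)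
    choose rho hrho0 hrho using hcoord
    set Rtot : ℝ := ∑ i, rho i with hRtot
    have hRtot0 : 0 ≤ Rtot := Finset.sum_nonneg fun i _ => hrho0 i
    rw [Metric.isBounded_iff_subset_closedBall 0]
    refine ⟨Rtot, fun x hx => ?_⟩
    simp only [mem_setOf_eq] at hx
    rw [Metric.mem_closedBall, dist_pi_le_iff hRtot0]
    intro i
    have key : f i (x i) ≤ α - S + mlow i := by
      have h1 : f i (x i) + ∑ j ∈ Finset.univ.erase i, mlow j ≤ ∑ j, f j (x j) := by
        rw [← Finset.add_sum_erase Finset.univ (fun j => f j (x j)) (Finset.mem_univ i)]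
        exact add_le_add le_rfl (Finset.sum_le_sum fun j _ => hmlow j (x j))
      have h2 : ∑ j ∈ Finset.univ.erase i, mlow j = S - mlow i :=
        Finset.sum_erase_eq_sub (Finset.mem_univ i)
      linarith
    have h3 := hrho i (x i) key
    have h4 : dist (x i) ((0 : Fin (n+1) → ℝ) i) = |x i| := by
      simp [Real.dist_eq]
    rw [h4]
    calc |x i| ≤ rho i := h3
      _ ≤ Rtot := Finset.single_le_sum (f := fun j => rho j)
          (fun j _ => hrho0 j) (Finset.mem_univ i)
  -- part 2
  have part2 : ∃ α : ℝ, {x : Fin (n + 1) → ℝ | F x ≤ (α : EReal)}.Nonempty ∧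
      Bornology.IsBounded {x : Fin (n + 1) → ℝ | F x ≤ (α : EReal)} := by
    refine ⟨G (fun _ => 0), ⟨fun _ => 0, ?_⟩, ?_⟩
    · simp only [mem_setOf_eq]
      rw [hFC _ h0C]
    · apply IsBounded.subset (hSb (G (fun _ => 0)))
      intro x hx
      simp only [mem_setOf_eq] at hx ⊢
      have h1 := le_trans (hFge x) hx
      exact EReal.coe_le_coe_iff.1 h1
  -- continuity of G
  have hfc : ∀ i, Continuous (f i) := fun i =>
    continuousOn_univ.1 ((hf i).continuousOn isOpen_univ)
  have hGcont : Continuous G := by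
    rw [hG]
    apply Continuous.add
    · exact continuous_finset_sum _ fun i _ => (hfc i).comp (continuous_apply i)
    · rw [hpen]
      apply continuous_finset_sum _ fun i _ => ?_
      apply Continuous.add
      · exact continuous_const.mul
          (Continuous.max ((continuous_apply i.castSucc).sub (continuous_apply i.succ))
            continuous_const)
      · exact continuous_const.mul
          (Continuous.max ((continuous_apply i.succ).sub (continuous_apply i.castSucc))
            continuous_const)
  -- C is closed
  have hCclosed : IsClosed C := by
    rw [hC]
    have hset : {x : Fin (n+1) → ℝ | (∀ i, lam i = ⊤ → x i.castSucc ≤ x i.succ) ∧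
        (∀ i, mu i = ⊤ → x i.succ ≤ x i.castSucc)} =
        (⋂ i, {x : Fin (n+1) → ℝ | lam i = ⊤ → x i.castSucc ≤ x i.succ}) ∩
        (⋂ i, {x : Fin (n+1) → ℝ | mu i = ⊤ → x i.succ ≤ x i.castSucc}) := by
      ext x
      simp [mem_iInter, mem_setOf_eq]
    rw [hset]
    apply IsClosed.inter
    · apply isClosed_iInter
      intro i
      by_cases h : lam i = ⊤
      · have he : {x : Fin (n+1) → ℝ | lam i = ⊤ → x i.castSucc ≤ x i.succ} =
            {x : Fin (n+1) → ℝ | x i.castSucc ≤ x i.succ} := by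
          ext x; simp [h]
        rw [he]
        exact isClosed_le (continuous_apply _) (continuous_apply _)
      · have he : {x : Fin (n+1) → ℝ | lam i = ⊤ → x i.castSucc ≤ x i.succ} = univ := by
          ext x; simp [h]
        rw [he]
        exact isClosed_univ
    · apply isClosed_iInter
      intro i
      by_cases h : mu i = ⊤
      · have he : {x : Fin (n+1) → ℝ | mu i = ⊤ → x i.succ ≤ x i.castSucc} =
            {x : Fin (n+1) → ℝ | x i.succ ≤ x i.castSucc} := by
          ext x; simp [h]
        rw [he]
        exact isClosed_le (continuous_apply _) (continuous_apply _)
      · have he : {x : Fin (n+1) → ℝ | mu i = ⊤ → x i.succ ≤ x i.castSucc} = univ := by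
          ext x; simp [h]
        rw [he]
        exact isClosed_univ
  -- part 3
  have part3 : ∃ xs : Fin (n + 1) → ℝ, ∀ x : Fin (n + 1) → ℝ, F xs ≤ F x := by
    set z0 : Fin (n+1) → ℝ := fun _ => 0 with hz0
    set K : Set (Fin (n+1) → ℝ) := C ∩ {x | G x ≤ G z0} with hK
    have hKne : z0 ∈ K := ⟨h0C, by exact le_refl (G z0)⟩
    have hKclosed : IsClosed K := hCclosed.inter (isClosed_le hGcont continuous_const)
    have hKbdd : IsBounded K := by
      apply (hSb (G z0)).subset
      intro x hx
      simp only [mem_setOf_eq]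
      have h1 := hx.2
      have hp := hpen_nonneg x
      simp only [hG, mem_setOf_eq] at h1
      have h2 : G z0 = ∑ i, f i (z0 i) + pen z0 := by rw [hG]
      linarith
    have hKcpt : IsCompact K := Metric.isCompact_of_isClosed_isBounded hKclosed hKbdd
    obtain ⟨xs, hxsK, hxs⟩ := hKcpt.exists_isMinOn ⟨z0, hKne⟩ hGcont.continuousOn
    refine ⟨xs, fun x => ?_⟩
    rw [hFC xs hxsK.1]
    by_cases hx : x ∈ C
    · rw [hFC x hx, EReal.coe_le_coe_iff]
      by_cases hle : G x ≤ G z0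
      · exact isMinOn_iff.1 hxs x ⟨hx, hle⟩
      · push_neg at hle
        exact le_trans (isMinOn_iff.1 hxs z0 hKne) hle.le
    · rw [hFtop x hx]
      exact le_top
  exact ⟨part1, part2, part3⟩
end

section
/- Let f₁,…,f_n : ℝ → ℝ be convex with bounded nonempty sublevel sets and λᵢ, μᵢ ∈ [0,∞). Define h₁ ≡ 0 and recursively h_i(t) = min_{s∈ℝ} { f_{i−1}(s) + h_{i−1}(s) + λ_{i−1}(s−t)₊ + μ_{i−1}(t−s)₊ } for i = 2,…,n. Then for each i, min_{t∈ℝ} { f_i(t) + h_i(t) } equals the minimum over (x₁,…,x_i) ∈ ℝ^i of Σ_{j=1}^{i} f_j(x_j) + Σ_{j=1}^{i−1} λ_j(x_j − x_{j+1})₊ + Σ_{j=1}^{i−1} μ_j(x_{j+1} − x_j)₊. In particular the optimal value of the full GNIO problem equals min_t { f_n(t) + h_n(t) }. -/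
open Filter Topology Set

/-! Peeling off the last coordinate shows, by induction on `i`, that `f i t + h i t` is the least
value of the objective truncated at stage `i` over all `x` with `x i = t`; minimizing over `t`
gives the identity, provided `f i + h i` attains its minimum. It does: `h i` is an attained
infimum over `s` of functions of `t` that are uniformly Lipschitz (the penalty is), hence
continuous, and it is bounded below by the minimum of `f (i - 1) + h (i - 1)`; and a convex
function on `ℝ` with a nonempty bounded sublevel set tends to `+∞` at `±∞`, by monotonicity of
its secant slopes. -/

theorem ConvexOn.tendsto_atTop_of_lt {f : ℝ → ℝ} (hf : ConvexOn ℝ univ f) {x y : ℝ}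
    (hxy : x < y) (hfxy : f x < f y) : Tendsto f atTop atTop := by
  set c := (f y - f x) / (y - x)
  have hc : 0 < c := div_pos (sub_pos.2 hfxy) (sub_pos.2 hxy)
  have hlin : Tendsto (fun z => f x + c * (z - x)) atTop atTop :=
    tendsto_atTop_add_const_left _ _ <|
      (tendsto_atTop_add_const_right _ _ tendsto_id).const_mul_atTop hc
  refine tendsto_atTop_mono' _ (eventually_ge_atTop y |>.mono fun z hz => ?_) hlin
  have hsec : c ≤ (f z - f x) / (z - x) :=
    hf.secant_mono trivial trivial trivial hxy.ne' (by linarith) hz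
  linarith [(le_div_iff₀ (by linarith : 0 < z - x)).1 hsec]

theorem ConvexOn.tendsto_atBot_of_lt {f : ℝ → ℝ} (hf : ConvexOn ℝ univ f) {x y : ℝ}
    (hxy : y < x) (hfxy : f x < f y) : Tendsto f atBot atTop := by
  have hneg : ConvexOn ℝ univ (f ∘ Neg.neg) := hf.comp_linearMap (-LinearMap.id)
  simpa [Function.comp_def] using
    (hneg.tendsto_atTop_of_lt (neg_lt_neg hxy) (by simpa using hfxy)).comp tendsto_neg_atBot_atTop

theorem ConvexOn.tendsto_cocompact_atTop {f : ℝ → ℝ} (hf : ConvexOn ℝ univ f) {α : ℝ}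
    (hne : {x | f x ≤ α}.Nonempty) (hbdd : Bornology.IsBounded {x | f x ≤ α}) :
    Tendsto f (cocompact ℝ) atTop := by
  obtain ⟨x₀, hx₀⟩ := hne
  obtain ⟨b, hb⟩ := hbdd.bddAbove
  obtain ⟨a, ha⟩ := hbdd.bddBelow
  have hgt : ∀ y, y ∉ {x | f x ≤ α} → f x₀ < f y := fun y hy => hx₀.trans_lt (not_le.1 hy)
  rw [cocompact_eq_atBot_atTop, tendsto_sup]
  refine ⟨hf.tendsto_atBot_of_lt (y := a - 1) ?_ (hgt _ fun h => ?_),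
    hf.tendsto_atTop_of_lt (y := b + 1) ?_ (hgt _ fun h => ?_)⟩
  · linarith [ha hx₀]
  · linarith [ha h]
  · linarith [hb hx₀]
  · linarith [hb h]

theorem LipschitzWith.of_forall_isLeast_range {σ α : Type*} [PseudoMetricSpace α] {K : NNReal}
    {F : σ → α → ℝ} {H : α → ℝ} (hF : ∀ s, LipschitzWith K (F s))
    (hH : ∀ t, IsLeast (range fun s => F s t) (H t)) : LipschitzWith K H := by
  refine LipschitzWith.of_le_add_mul K fun t t' => ?_
  obtain ⟨s, hs : F s t' = H t'⟩ := (hH t').1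
  calc H t ≤ F s t := (hH t).2 ⟨s, rfl⟩
    _ ≤ F s t' + K * dist t t' := (hF s).le_add_mul t t'
    _ = H t' + K * dist t t' := by rw [hs]

theorem Continuous.exists_forall_le_add {f g : ℝ → ℝ} (hf : Continuous f)
    (hfc : Tendsto f (cocompact ℝ) atTop) (hg : Continuous g) {c : ℝ} (hgc : ∀ t, c ≤ g t) :
    ∃ t, ∀ s, f t + g t ≤ f s + g s :=
  (hf.add hg).exists_forall_le <|
    tendsto_atTop_mono (fun t => (add_le_add_iff_left _).2 (hgc t))
      (tendsto_atTop_add_const_right _ c hfc)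

namespace GNIO

def penalty (l m s t : ℝ) : ℝ := l * max (s - t) 0 + m * max (t - s) 0

def objective (f : ℕ → ℝ → ℝ) (lam mu : ℕ → ℝ) (i : ℕ) (x : ℕ → ℝ) : ℝ :=
  (∑ j ∈ Finset.Icc 1 i, f j (x j)) +
    ∑ j ∈ Finset.Icc 1 (i - 1), penalty (lam j) (mu j) (x j) (x (j + 1))

theorem penalty_nonneg {l m : ℝ} (hl : 0 ≤ l) (hm : 0 ≤ m) (s t : ℝ) : 0 ≤ penalty l m s t := by
  unfold penalty; positivity

theorem lipschitzWith_penalty (l m s : ℝ) : LipschitzWith (‖l‖₊ + ‖m‖₊) (penalty l m s) := by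
  refine LipschitzWith.of_dist_le_mul fun t t' => ?_
  have hpos : |max (s - t) 0 - max (s - t') 0| ≤ |t - t'| :=
    (abs_max_sub_max_le_abs _ _ _).trans (by rw [sub_sub_sub_cancel_left, abs_sub_comm])
  have hneg : |max (t - s) 0 - max (t' - s) 0| ≤ |t - t'| :=
    (abs_max_sub_max_le_abs _ _ _).trans (by rw [sub_sub_sub_cancel_right])
  simp only [Real.dist_eq, NNReal.coe_add, coe_nnnorm, Real.norm_eq_abs]
  calc |penalty l m s t - penalty l m s t'|
      = |l * (max (s - t) 0 - max (s - t') 0) + m * (max (t - s) 0 - max (t' - s) 0)| := by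
        unfold penalty; ring_nf
    _ ≤ |l| * |t - t'| + |m| * |t - t'| := by
        refine (abs_add_le _ _).trans ?_
        rw [abs_mul, abs_mul]
        exact add_le_add (mul_le_mul_of_nonneg_left hpos (abs_nonneg l))
          (mul_le_mul_of_nonneg_left hneg (abs_nonneg m))
    _ = (|l| + |m|) * |t - t'| := by ring

variable {f : ℕ → ℝ → ℝ} {lam mu : ℕ → ℝ}

theorem objective_one (x : ℕ → ℝ) : objective f lam mu 1 x = f 1 (x 1) := by
  simp [objective]

theorem objective_succ {i : ℕ} (hi : 1 ≤ i) (x : ℕ → ℝ) :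
    objective f lam mu (i + 1) x = objective f lam mu i x +
      penalty (lam i) (mu i) (x i) (x (i + 1)) + f (i + 1) (x (i + 1)) := by
  obtain ⟨k, rfl⟩ : ∃ k, i = k + 1 := ⟨i - 1, by omega⟩
  simp only [objective, Nat.add_sub_cancel, Finset.sum_Icc_succ_top (by omega : 1 ≤ k + 1 + 1),
    Finset.sum_Icc_succ_top (by omega : 1 ≤ k + 1)]
  ring

theorem objective_congr {i : ℕ} {x y : ℕ → ℝ} (hxy : ∀ j ≤ i, x j = y j) :
    objective f lam mu i x = objective f lam mu i y := by
  unfold objective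
  congr 1 <;> refine Finset.sum_congr rfl fun j hj => ?_
  · rw [hxy j (Finset.mem_Icc.1 hj).2]
  · obtain ⟨hj1, hj2⟩ := Finset.mem_Icc.1 hj
    rw [hxy j (by omega), hxy (j + 1) (by omega)]

structure IsValueFunction (f : ℕ → ℝ → ℝ) (lam mu : ℕ → ℝ) (n : ℕ) (h : ℕ → ℝ → ℝ) : Prop where
  one : ∀ t, h 1 t = 0
  succ : ∀ i, 1 ≤ i → i + 1 ≤ n → ∀ t,
    IsLeast (range fun s => f i s + h i s + penalty (lam i) (mu i) s t) (h (i + 1) t)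

variable {h : ℕ → ℝ → ℝ} {n : ℕ}

theorem IsValueFunction.le_objective (hh : IsValueFunction f lam mu n h) :
    ∀ i, 1 ≤ i → i ≤ n → ∀ x, f i (x i) + h i (x i) ≤ objective f lam mu i x := by
  intro i hi
  induction i, hi using Nat.le_induction with
  | base => intro _ x; simp [hh.one, objective_one]
  | succ i hi ih =>
    intro hin x
    have hstep := (hh.succ i hi hin (x (i + 1))).2 ⟨x i, rfl⟩
    rw [objective_succ hi]
    linarith [ih (by omega) x]

theorem IsValueFunction.exists_objective_eq (hh : IsValueFunction f lam mu n h) :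
    ∀ i, 1 ≤ i → i ≤ n → ∀ t, ∃ x : ℕ → ℝ, x i = t ∧ objective f lam mu i x = f i t + h i t := by
  intro i hi
  induction i, hi using Nat.le_induction with
  | base => exact fun _ t => ⟨fun _ => t, rfl, by simp [hh.one, objective_one]⟩
  | succ i hi ih =>
    intro hin t
    obtain ⟨s, hs⟩ := (hh.succ i hi hin t).1
    obtain ⟨x, hxs, hx⟩ := ih (by omega) s
    refine ⟨Function.update x (i + 1) t, Function.update_self .., ?_⟩
    have hagree : ∀ j ≤ i, Function.update x (i + 1) t j = x j :=
      fun j hj => Function.update_of_ne (by omega) _ _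
    rw [objective_succ hi, objective_congr hagree, hagree i le_rfl, Function.update_self, hx, hxs]
    linarith [hs]

theorem IsValueFunction.exists_forall_le (hh : IsValueFunction f lam mu n h)
    (hfc : ∀ i, Continuous (f i)) (hfco : ∀ i, Tendsto (f i) (cocompact ℝ) atTop)
    (hlam : ∀ i, 0 ≤ lam i) (hmu : ∀ i, 0 ≤ mu i) :
    ∀ i, 1 ≤ i → i ≤ n → ∃ t, ∀ s, f i t + h i t ≤ f i s + h i s := by
  intro i hi
  induction i, hi using Nat.le_induction with
  | base =>
    intro _
    simp only [hh.one]
    exact (hfc 1).exists_forall_le_add (hfco 1) continuous_const (c := 0) fun _ => le_rfl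
  | succ i hi ih =>
    intro hin
    obtain ⟨t₀, ht₀⟩ := ih (by omega)
    have hcont : Continuous (h (i + 1)) :=
      (LipschitzWith.of_forall_isLeast_range
        (fun s => (LipschitzWith.const _).add (lipschitzWith_penalty _ _ s))
        (hh.succ i hi hin)).continuous
    refine (hfc (i + 1)).exists_forall_le_add (hfco (i + 1)) hcont (c := f i t₀ + h i t₀)
      fun t => ?_
    obtain ⟨s, hs⟩ := (hh.succ i hi hin t).1
    rw [← hs]
    exact (ht₀ s).trans (le_add_of_nonneg_right (penalty_nonneg (hlam i) (hmu i) s t))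

end GNIO

theorem stmt_17_general (n : ℕ) (f : ℕ → ℝ → ℝ)
    (hfconv : ∀ i, ConvexOn ℝ Set.univ (f i))
    (hflev : ∀ i, ∃ α : ℝ,
      {x : ℝ | f i x ≤ α}.Nonempty ∧ Bornology.IsBounded {x : ℝ | f i x ≤ α})
    (lam mu : ℕ → ℝ) (hlam : ∀ i, 0 ≤ lam i) (hmu : ∀ i, 0 ≤ mu i)
    (h : ℕ → ℝ → ℝ) (hh1 : ∀ t : ℝ, h 1 t = 0)
    (hhrec : ∀ i, 2 ≤ i → i ≤ n → ∀ t : ℝ,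
      IsLeast (Set.range fun s : ℝ =>
          f (i - 1) s + h (i - 1) s + lam (i - 1) * max (s - t) 0 + mu (i - 1) * max (t - s) 0)
        (h i t)) :
    ∀ i, 1 ≤ i → i ≤ n → ∃ v : ℝ,
      IsLeast (Set.range fun t : ℝ => f i t + h i t) v ∧
      IsLeast {w : ℝ | ∃ x : ℕ → ℝ,
          w = (∑ j ∈ Finset.Icc 1 i, f j (x j)) +
              ∑ j ∈ Finset.Icc 1 (i - 1),
                (lam j * max (x j - x (j + 1)) 0 + mu j * max (x (j + 1) - x j) 0)} v := by
  have hh : GNIO.IsValueFunction f lam mu n h := ⟨hh1, fun i hi hin t => by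
    simpa only [Nat.add_sub_cancel, GNIO.penalty, add_assoc] using hhrec (i + 1) (by omega) hin t⟩
  have hfco : ∀ i, Tendsto (f i) (cocompact ℝ) atTop := fun i =>
    have ⟨_, hne, hbdd⟩ := hflev i
    (hfconv i).tendsto_cocompact_atTop hne hbdd
  intro i hi hin
  obtain ⟨t, ht⟩ := hh.exists_forall_le (fun i => (hfconv i).locallyLipschitz.continuous) hfco
    hlam hmu i hi hin
  refine ⟨f i t + h i t, ⟨⟨t, rfl⟩, forall_mem_range.2 ht⟩, ?_, ?_⟩
  · obtain ⟨x, -, hx⟩ := hh.exists_objective_eq i hi hin t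
    exact ⟨x, hx.symm⟩
  · rintro w ⟨x, rfl⟩
    exact (ht (x i)).trans (hh.le_objective i hi hin x)

theorem stmt_17 (n : ℕ) (hn : 1 ≤ n) (f : ℕ → ℝ → ℝ)
    (hfconv : ∀ i, ConvexOn ℝ Set.univ (f i))
    (hflev : ∀ i, ∃ α : ℝ,
      {x : ℝ | f i x ≤ α}.Nonempty ∧ Bornology.IsBounded {x : ℝ | f i x ≤ α})
    (lam mu : ℕ → ℝ) (hlam : ∀ i, 0 ≤ lam i) (hmu : ∀ i, 0 ≤ mu i)
    (h : ℕ → ℝ → ℝ) (hh1 : ∀ t : ℝ, h 1 t = 0)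
    (hhrec : ∀ i, 2 ≤ i → i ≤ n → ∀ t : ℝ,
      IsLeast (Set.range fun s : ℝ =>
          f (i - 1) s + h (i - 1) s + lam (i - 1) * max (s - t) 0 + mu (i - 1) * max (t - s) 0)
        (h i t)) :
    ∀ i, 1 ≤ i → i ≤ n → ∃ v : ℝ,
      IsLeast (Set.range fun t : ℝ => f i t + h i t) v ∧
      IsLeast {w : ℝ | ∃ x : ℕ → ℝ,
          w = (∑ j ∈ Finset.Icc 1 i, f j (x j)) +
              ∑ j ∈ Finset.Icc 1 (i - 1),
                (lam j * max (x j - x (j + 1)) 0 + mu j * max (x (j + 1) - x j) 0)} v :=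
  stmt_17_general n f hfconv hflev lam mu hlam hmu h hh1 hhrec
end

section
/- With the notation of the dynamic programming recursion (h₁ ≡ 0, h_i the value functions, g_i = f_i + h_i), suppose x_n* ∈ argmin_t g_n(t) and, for i = n−1 down to 1, x_i* ∈ argmin_t { g_i(t) + λ_i(t − x_{i+1}*)₊ + μ_i(x_{i+1}* − t)₊ }. Then (x₁*,…,x_n*) is a global minimizer of F(x) = Σᵢ fᵢ(xᵢ) + Σᵢ λᵢ(xᵢ−xᵢ₊₁)₊ + Σᵢ μᵢ(xᵢ₊₁−xᵢ)₊ over ℝⁿ. -/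
/-!
Dynamic programming: by induction along the chain, `f i (y i) + h i (y i)` is a lower bound for
the cost of the first `i` coordinates of any `y`, because `h (i + 1)` is a minimum over the previous
coordinate. Along the backtracked `xs` every such minimum is attained, so the bound is an equality
there, and `xs n` minimizes `f n + h n`.
-/

namespace ChainCost

def chainCost (f : ℕ → ℝ → ℝ) (c : ℕ → ℝ → ℝ → ℝ) (y : ℕ → ℝ) (i : ℕ) : ℝ :=
  ∑ j ∈ Finset.Icc 1 i, f j (y j) + ∑ j ∈ Finset.Icc 1 (i - 1), c j (y j) (y (j + 1))

variable {f : ℕ → ℝ → ℝ} {c : ℕ → ℝ → ℝ → ℝ} {h : ℕ → ℝ → ℝ} {n : ℕ}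

theorem chainCost_one (y : ℕ → ℝ) : chainCost f c y 1 = f 1 (y 1) := by
  simp [chainCost]

theorem chainCost_succ (y : ℕ → ℝ) {i : ℕ} (hi : 1 ≤ i) :
    chainCost f c y (i + 1) = chainCost f c y i + c i (y i) (y (i + 1)) + f (i + 1) (y (i + 1)) := by
  obtain ⟨k, rfl⟩ := Nat.exists_eq_add_of_le' hi
  simp only [chainCost, Nat.add_sub_cancel, Finset.sum_Icc_succ_top (by omega : 1 ≤ k + 1 + 1),
    Finset.sum_Icc_succ_top (by omega : 1 ≤ k + 1)]
  ring

theorem add_value_le_chainCost (hh1 : ∀ t, h 1 t = 0)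
    (hle : ∀ i, 1 ≤ i → i < n → ∀ s t, h (i + 1) t ≤ f i s + h i s + c i s t)
    (y : ℕ → ℝ) {i : ℕ} (hi : 1 ≤ i) (hin : i ≤ n) :
    f i (y i) + h i (y i) ≤ chainCost f c y i := by
  induction i, hi using Nat.le_induction with
  | base => simp [hh1, chainCost_one]
  | succ k hk ih =>
    have hstep := hle k hk (by omega) (y k) (y (k + 1))
    rw [chainCost_succ y hk]
    linarith [ih (by omega)]

theorem chainCost_le_add_value (hh1 : ∀ t, h 1 t = 0) {xs : ℕ → ℝ}
    (hatt : ∀ i, 1 ≤ i → i < n →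
      f i (xs i) + h i (xs i) + c i (xs i) (xs (i + 1)) ≤ h (i + 1) (xs (i + 1)))
    {i : ℕ} (hi : 1 ≤ i) (hin : i ≤ n) :
    chainCost f c xs i ≤ f i (xs i) + h i (xs i) := by
  induction i, hi using Nat.le_induction with
  | base => simp [hh1, chainCost_one]
  | succ k hk ih =>
    have hstep := hatt k hk (by omega)
    rw [chainCost_succ xs hk]
    linarith [ih (by omega)]

theorem chainCost_le_of_backtrack (hn : 1 ≤ n) (hh1 : ∀ t, h 1 t = 0)
    (hle : ∀ i, 1 ≤ i → i < n → ∀ s t, h (i + 1) t ≤ f i s + h i s + c i s t)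
    {xs : ℕ → ℝ} (hxn : ∀ t, f n (xs n) + h n (xs n) ≤ f n t + h n t)
    (hatt : ∀ i, 1 ≤ i → i < n →
      f i (xs i) + h i (xs i) + c i (xs i) (xs (i + 1)) ≤ h (i + 1) (xs (i + 1)))
    (y : ℕ → ℝ) :
    chainCost f c xs n ≤ chainCost f c y n :=
  calc chainCost f c xs n ≤ f n (xs n) + h n (xs n) := chainCost_le_add_value hh1 hatt hn le_rfl
    _ ≤ f n (y n) + h n (y n) := hxn (y n)
    _ ≤ chainCost f c y n := add_value_le_chainCost hh1 hle y hn le_rfl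

end ChainCost

theorem stmt_18_general (n : ℕ) (hn : 1 ≤ n) (f : ℕ → ℝ → ℝ)
    (lam mu : ℕ → ℝ)
    (h : ℕ → ℝ → ℝ) (hh1 : ∀ t : ℝ, h 1 t = 0)
    (hhrec : ∀ i, 2 ≤ i → i ≤ n → ∀ t : ℝ,
      IsLeast (Set.range fun s : ℝ =>
          f (i - 1) s + h (i - 1) s + lam (i - 1) * max (s - t) 0 + mu (i - 1) * max (t - s) 0)
        (h i t))
    (xs : ℕ → ℝ)
    (hxn : ∀ t : ℝ, f n (xs n) + h n (xs n) ≤ f n t + h n t)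
    (hback : ∀ i, 1 ≤ i → i ≤ n - 1 → ∀ t : ℝ,
      f i (xs i) + h i (xs i) + lam i * max (xs i - xs (i + 1)) 0
          + mu i * max (xs (i + 1) - xs i) 0
        ≤ f i t + h i t + lam i * max (t - xs (i + 1)) 0 + mu i * max (xs (i + 1) - t) 0) :
    ∀ x : ℕ → ℝ,
      (∑ j ∈ Finset.Icc 1 n, f j (xs j)) +
          (∑ j ∈ Finset.Icc 1 (n - 1),
            (lam j * max (xs j - xs (j + 1)) 0 + mu j * max (xs (j + 1) - xs j) 0))
        ≤ (∑ j ∈ Finset.Icc 1 n, f j (x j)) +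
            ∑ j ∈ Finset.Icc 1 (n - 1),
              (lam j * max (x j - x (j + 1)) 0 + mu j * max (x (j + 1) - x j) 0) := by
  set c : ℕ → ℝ → ℝ → ℝ := fun j a b => lam j * max (a - b) 0 + mu j * max (b - a) 0
  have hrec (i : ℕ) (hi : 1 ≤ i) (hin : i < n) (t : ℝ) :
      IsLeast (Set.range fun s => f i s + h i s + c i s t) (h (i + 1) t) := by
    simpa only [Nat.add_sub_cancel, c, add_assoc] using hhrec (i + 1) (by omega) (by omega) t
  have hle (i : ℕ) (hi : 1 ≤ i) (hin : i < n) (s t : ℝ) :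
      h (i + 1) t ≤ f i s + h i s + c i s t :=
    (hrec i hi hin t).2 ⟨s, rfl⟩
  have hatt (i : ℕ) (hi : 1 ≤ i) (hin : i < n) :
      f i (xs i) + h i (xs i) + c i (xs i) (xs (i + 1)) ≤ h (i + 1) (xs (i + 1)) := by
    obtain ⟨s, hs⟩ := (hrec i hi hin (xs (i + 1))).1
    rw [← hs]
    simpa only [c, add_assoc] using hback i hi (by omega) s
  exact ChainCost.chainCost_le_of_backtrack hn hh1 hle hxn hatt

theorem stmt_18 (n : ℕ) (hn : 1 ≤ n) (f : ℕ → ℝ → ℝ)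
    (hfconv : ∀ i, ConvexOn ℝ Set.univ (f i))
    (hflev : ∀ i, ∃ α : ℝ,
      {x : ℝ | f i x ≤ α}.Nonempty ∧ Bornology.IsBounded {x : ℝ | f i x ≤ α})
    (lam mu : ℕ → ℝ) (hlam : ∀ i, 0 ≤ lam i) (hmu : ∀ i, 0 ≤ mu i)
    (h : ℕ → ℝ → ℝ) (hh1 : ∀ t : ℝ, h 1 t = 0)
    (hhrec : ∀ i, 2 ≤ i → i ≤ n → ∀ t : ℝ,
      IsLeast (Set.range fun s : ℝ =>
          f (i - 1) s + h (i - 1) s + lam (i - 1) * max (s - t) 0 + mu (i - 1) * max (t - s) 0)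
        (h i t))
    (xs : ℕ → ℝ)
    (hxn : ∀ t : ℝ, f n (xs n) + h n (xs n) ≤ f n t + h n t)
    (hback : ∀ i, 1 ≤ i → i ≤ n - 1 → ∀ t : ℝ,
      f i (xs i) + h i (xs i) + lam i * max (xs i - xs (i + 1)) 0
          + mu i * max (xs (i + 1) - xs i) 0
        ≤ f i t + h i t + lam i * max (t - xs (i + 1)) 0 + mu i * max (xs (i + 1) - t) 0) :
    ∀ x : ℕ → ℝ,
      (∑ j ∈ Finset.Icc 1 n, f j (xs j)) +
          (∑ j ∈ Finset.Icc 1 (n - 1),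
            (lam j * max (xs j - xs (j + 1)) 0 + mu j * max (xs (j + 1) - xs j) 0))
        ≤ (∑ j ∈ Finset.Icc 1 n, f j (x j)) +
            ∑ j ∈ Finset.Icc 1 (n - 1),
              (lam j * max (x j - x (j + 1)) 0 + mu j * max (x (j + 1) - x j) 0) :=
  stmt_18_general n hn f lam mu h hh1 hhrec xs hxn hback
end
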